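/- Let a finite DTMDP with uniformisation rate q > 0, time bound t ≥ 0 and reward structure (c, f) be given, and fix an initial state s0. For every history-dependent randomised (HR) scheduler σ there exists a counting randomised (CR) scheduler σ' with V(σ', s0) = V(σ, s0); conversely, for every CR scheduler σ' there exists an HR scheduler σ'' with V(σ'', s0) = V(σ', s0) (this σ'' works simultaneously for every initial state). -/
import Mathlib


open scoped BigOperators

namespace TR

variable {S A : Type} [Fintype S] [Fintype A] [DecidableEq S] [DecidableEq A]

/-- Poisson probabilities `φ_λ(i) = λ^i/i! · e^{−λ}`. -/
noncomputable def phi (lam : ℝ) (i : ℕ) : ℝ :=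
  lam ^ i / (Nat.factorial i : ℝ) * Real.exp (-lam)

/-- `ψ_λ(i) = 1 − Σ_{j=0}^{i} φ_λ(j)`. -/
noncomputable def psi (lam : ℝ) (i : ℕ) : ℝ :=
  1 - ∑ j ∈ Finset.range (i + 1), phi lam j

/-- Action `a` is enabled in state `s`. -/
def Enabled (P : S → A → S → ℝ) (s : S) (a : A) : Prop :=
  ∑ s', P s a s' = 1

/-- `P` is the transition function of a finite DTMDP. -/
def IsDTMDP (P : S → A → S → ℝ) : Prop :=
  (∀ s a s', 0 ≤ P s a s') ∧
  (∀ s a, (∑ s', P s a s') = 0 ∨ (∑ s', P s a s') = 1) ∧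
  (∀ s, ∃ a, Enabled P s a)

/-- History-dependent randomised scheduler.  A history is encoded as a pair of
a list of (state, action) pairs (most recent first) and the current state. -/
def IsHR (P : S → A → S → ℝ) (sch : List (S × A) × S → A → ℝ) : Prop :=
  (∀ h a, 0 ≤ sch h a) ∧ (∀ h, ∑ a, sch h a = 1) ∧
  (∀ h a, 0 < sch h a → Enabled P h.2 a)

/-- Probability of the path recorded in the given history (of length `n`,
starting at `s0`) under the HR scheduler `sch`. -/
noncomputable def hrHistProb (P : S → A → S → ℝ) (sch : List (S × A) × S → A → ℝ)
    (s0 : S) : ℕ → List (S × A) × S → ℝ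
  | 0, h => if h.1 = [] ∧ h.2 = s0 then 1 else 0
  | _ + 1, ([], _) => 0
  | n + 1, ((s, a) :: rest, s') =>
      hrHistProb P sch s0 n (rest, s) * sch (rest, s) a * P s a s'

/-- Transient probability `tprob^σ(s0, n, s)`: total probability of all paths of
length `n` from `s0` ending in `s`. -/
noncomputable def hrProb (P : S → A → S → ℝ) (sch : List (S × A) × S → A → ℝ)
    (s0 : S) (n : ℕ) (s : S) : ℝ :=
  ∑' l : List (S × A), hrHistProb P sch s0 n (l, s)

/-- Counting randomised scheduler. -/
def IsCR (P : S → A → S → ℝ) (sch : S → ℕ → A → ℝ) : Prop :=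
  (∀ s n a, 0 ≤ sch s n a) ∧ (∀ s n, ∑ a, sch s n a = 1) ∧
  (∀ s n a, 0 < sch s n a → Enabled P s a)

/-- Transient distribution of a CR scheduler. -/
noncomputable def crProb (P : S → A → S → ℝ) (sch : S → ℕ → A → ℝ) (s0 : S) :
    ℕ → S → ℝ
  | 0 => fun s => if s = s0 then 1 else 0
  | n + 1 => fun s' => ∑ s, crProb P sch s0 n s * ∑ a, sch s n a * P s a s'

/-- Counting deterministic scheduler. -/
def IsCD (P : S → A → S → ℝ) (d : S → ℕ → A) : Prop :=
  ∀ s n, Enabled P s (d s n)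

/-- Transient distribution of a CD scheduler. -/
noncomputable def cdProb (P : S → A → S → ℝ) (d : S → ℕ → A) (s0 : S) :
    ℕ → S → ℝ
  | 0 => fun s => if s = s0 then 1 else 0
  | n + 1 => fun s' => ∑ s, cdProb P d s0 n s * P s (d s n) s'

/-- The value `V = Σ_i [ φ_{qt}(i)·Σ_s p_i(s)·f(s) + ψ_{qt}(i)·Σ_s p_i(s)·c(s)/q ]`
of transient distributions `p` w.r.t. uniformisation rate `q`, time bound `t`
and rewards `(c, f)`. -/
noncomputable def value (q t : ℝ) (c f : S → ℝ) (p : ℕ → S → ℝ) : ℝ :=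
  ∑' i : ℕ, (phi (q * t) i * ∑ s, p i s * f s
    + psi (q * t) i * ∑ s, p i s * (c s / q))

/-- Value-iteration vectors of a CR scheduler: `crVI … k j` is `q_{k+1-j}`,
i.e. `crVI … k 0 = q_{k+1} ≡ 0` and `crVI … k (k+1) = q_0`. -/
noncomputable def crVI (P : S → A → S → ℝ) (sch : S → ℕ → A → ℝ)
    (q t : ℝ) (c f : S → ℝ) (k : ℕ) : ℕ → S → ℝ
  | 0 => fun _ => 0
  | j + 1 => fun s =>
      (∑ a, sch s (k - j) a * ∑ s', P s a s' * crVI P sch q t c f k j s')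
      + phi (q * t) (k - j) * f s + psi (q * t) (k - j) * (c s / q)

/-- Maximising value-iteration vectors: `maxVI … k j` is `q'_{k+1-j}`,
i.e. `maxVI … k 0 = q'_{k+1} ≡ 0` and `maxVI … k (k+1) = q'_0`. -/
noncomputable def maxVI (P : S → A → S → ℝ)
    (q t : ℝ) (c f : S → ℝ) (k : ℕ) : ℕ → S → ℝ
  | 0 => fun _ => 0
  | j + 1 => fun s =>
      sSup {x : ℝ | ∃ a, Enabled P s a ∧
        x = ∑ s', P s a s' * maxVI P q t c f k j s'}
      + phi (q * t) (k - j) * f s + psi (q * t) (k - j) * (c s / q)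

/-- Maximum of a real-valued function on a finite nonempty type. -/
noncomputable def maxOf [Nonempty S] (g : S → ℝ) : ℝ :=
  Finset.univ.sup' Finset.univ_nonempty g

/-- `k` is `ε`-sufficient: `Σ_{n=0}^{k} ψ_{qt}(n) > qt − ε·q/(2·max_s c(s))`
(dropped if `max_s c(s) = 0`) and `ψ_{qt}(k)·max_s f(s) < ε/2`. -/
def EpsSufficient [Nonempty S] (q t : ℝ) (c f : S → ℝ) (ε : ℝ) (k : ℕ) : Prop :=
  (maxOf c = 0 ∨
    (∑ n ∈ Finset.range (k + 1), psi (q * t) n) > q * t - ε * q / (2 * maxOf c)) ∧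
  psi (q * t) k * maxOf f < ε / 2

/-- `n`-step transition probabilities (matrix powers) of a stochastic matrix. -/
noncomputable def matPow (P : S → S → ℝ) : ℕ → S → S → ℝ
  | 0 => fun s s' => if s = s' then 1 else 0
  | n + 1 => fun s s' => ∑ s'', matPow P n s s'' * P s'' s'

/-- `part` is a partition of the finite state set `S`. -/
def IsPartition (part : Finset (Finset S)) : Prop :=
  (∀ z ∈ part, z.Nonempty) ∧ (∀ s : S, ∃ z ∈ part, s ∈ z) ∧
  (∀ z ∈ part, ∀ z' ∈ part, z ≠ z' → Disjoint z z')

/-- Abstraction DTMDP of a stochastic matrix w.r.t. a partition: states are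
blocks, actions are concrete states, `P̄(z, s, z') = Σ_{s' ∈ z'} P(s,s')` if
`s ∈ z` and `0` otherwise. -/
noncomputable def abst (P : S → S → ℝ) (part : Finset (Finset S)) :
    {z // z ∈ part} → S → {z // z ∈ part} → ℝ :=
  fun z s z' => if s ∈ z.1 then ∑ s' ∈ z'.1, P s s' else 0


section Aux6

variable (S A) in
/-- The finite set of `(S × A)`-lists of length `n`. -/
def Ln : ℕ → Finset (List (S × A))
  | 0 => {[]}
  | n + 1 => ((Finset.univ : Finset (S × A)) ×ˢ Ln n).image (fun p => p.1 :: p.2)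

lemma mem_Ln : ∀ (n : ℕ) (l : List (S × A)), l ∈ Ln S A n ↔ l.length = n := by
  intro n
  induction n with
  | zero => intro l; simp [Ln, List.length_eq_zero_iff]
  | succ n ih =>
    intro l
    cases l with
    | nil => simp [Ln]
    | cons x xs =>
      constructor
      · intro hm
        rw [Ln, Finset.mem_image] at hm
        obtain ⟨⟨y, ys⟩, hp, heq⟩ := hm
        rw [Finset.mem_product] at hp
        simp only [List.cons.injEq] at heq
        obtain ⟨-, rfl⟩ := heq
        simp [(ih ys).1 hp.2]
      · intro h
        rw [Ln, Finset.mem_image]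
        refine ⟨(x, xs), ?_, rfl⟩
        rw [Finset.mem_product]
        exact ⟨Finset.mem_univ _, (ih xs).2 (by simpa using h)⟩

lemma hist_len (P : S → A → S → ℝ) (sch : List (S × A) × S → A → ℝ) (s0 : S) :
    ∀ (n : ℕ) (l : List (S × A)) (s : S),
      hrHistProb P sch s0 n (l, s) ≠ 0 → l.length = n := by
  intro n
  induction n with
  | zero =>
    intro l s h
    by_cases hc : l = [] ∧ s = s0
    · simp [hc.1]
    · exact absurd (by simp [hrHistProb, hc]) h
  | succ n ih =>
    intro l s h
    cases l with
    | nil => exact absurd rfl h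
    | cons x xs =>
      obtain ⟨a, b⟩ := x
      have : hrHistProb P sch s0 n (xs, a) ≠ 0 := by
        intro h0
        apply h
        simp [hrHistProb, h0]
      simpa using ih xs a this

lemma hist_nonneg (P : S → A → S → ℝ) (hP0 : ∀ s a s', 0 ≤ P s a s')
    (sch : List (S × A) × S → A → ℝ) (hs0 : ∀ h a, 0 ≤ sch h a) (s0 : S) :
    ∀ (n : ℕ) (l : List (S × A)) (s : S), 0 ≤ hrHistProb P sch s0 n (l, s) := by
  intro n
  induction n with
  | zero =>
    intro l s
    by_cases hc : l = [] ∧ s = s0 <;> simp [hrHistProb, hc]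
  | succ n ih =>
    intro l s
    cases l with
    | nil => simp [hrHistProb]
    | cons x xs =>
      obtain ⟨a, b⟩ := x
      show 0 ≤ hrHistProb P sch s0 n (xs, a) * sch (xs, a) b * P a b s
      exact mul_nonneg (mul_nonneg (ih xs a) (hs0 _ _)) (hP0 _ _ _)

lemma hrProb_eq_sum (P : S → A → S → ℝ) (sch : List (S × A) × S → A → ℝ)
    (s0 : S) (n : ℕ) (s : S) :
    hrProb P sch s0 n s = ∑ l ∈ Ln S A n, hrHistProb P sch s0 n (l, s) := by
  refine tsum_eq_sum ?_
  intro l hl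
  by_contra h
  exact hl ((mem_Ln n l).2 (hist_len P sch s0 n l s h))

lemma hrProb_zero (P : S → A → S → ℝ) (sch : List (S × A) × S → A → ℝ)
    (s0 : S) (s : S) :
    hrProb P sch s0 0 s = if s = s0 then 1 else 0 := by
  rw [hrProb_eq_sum]
  by_cases hc : s = s0 <;> simp [Ln, hrHistProb, hc]

lemma hrProb_succ (P : S → A → S → ℝ) (sch : List (S × A) × S → A → ℝ)
    (s0 : S) (n : ℕ) (s' : S) :
    hrProb P sch s0 (n + 1) s' =
      ∑ s, ∑ a, (∑ l ∈ Ln S A n, hrHistProb P sch s0 n (l, s) * sch (l, s) a)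
        * P s a s' := by
  rw [hrProb_eq_sum]
  show (∑ l ∈ ((Finset.univ : Finset (S × A)) ×ˢ Ln S A n).image
      (fun p => p.1 :: p.2), hrHistProb P sch s0 (n + 1) (l, s')) = _
  rw [Finset.sum_image (by
    rintro ⟨x, xs⟩ _ ⟨y, ys⟩ _ h
    simp only [List.cons.injEq] at h
    exact Prod.ext h.1 h.2)]
  rw [Finset.sum_product]
  rw [Fintype.sum_prod_type]
  refine Finset.sum_congr rfl fun s _ => ?_
  refine Finset.sum_congr rfl fun a _ => ?_
  rw [Finset.sum_mul]
  rfl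

lemma hrProb_nonneg (P : S → A → S → ℝ) (hP0 : ∀ s a s', 0 ≤ P s a s')
    (sch : List (S × A) × S → A → ℝ) (hs0 : ∀ h a, 0 ≤ sch h a) (s0 : S)
    (n : ℕ) (s : S) : 0 ≤ hrProb P sch s0 n s := by
  rw [hrProb_eq_sum]
  exact Finset.sum_nonneg fun l _ => hist_nonneg P hP0 sch hs0 s0 n l s

end Aux6

/-- for a fixed initial state every HR scheduler has an equal-value
CR scheduler, and conversely every CR scheduler has an equal-value HR scheduler
that works simultaneously for every initial state. -/
theorem stmt6 {S A : Type} [Fintype S] [Fintype A] [DecidableEq S] [DecidableEq A]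
    (P : S → A → S → ℝ) (hP : IsDTMDP P)
    (q t : ℝ) (hq : 0 < q) (ht : 0 ≤ t)
    (c f : S → ℝ) (hc : ∀ s, 0 ≤ c s) (hf : ∀ s, 0 ≤ f s) (s0 : S) :
    (∀ sch : List (S × A) × S → A → ℝ, IsHR P sch →
      ∃ sch' : S → ℕ → A → ℝ, IsCR P sch' ∧
        value q t c f (crProb P sch' s0) = value q t c f (hrProb P sch s0)) ∧
    (∀ sch' : S → ℕ → A → ℝ, IsCR P sch' →
      ∃ sch'' : List (S × A) × S → A → ℝ, IsHR P sch'' ∧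
        ∀ s0' : S,
          value q t c f (hrProb P sch'' s0') = value q t c f (crProb P sch' s0')) := by
  obtain ⟨hP0, _, hPen⟩ := hP
  constructor
  · -- HR ⇒ CR
    intro sch hsch
    obtain ⟨hs0, hs1, hs2⟩ := hsch
    set g : ℕ → S → A → ℝ := fun n s a =>
      ∑ l ∈ Ln S A n, hrHistProb P sch s0 n (l, s) * sch (l, s) a with hg
    have hg0 : ∀ n s a, 0 ≤ g n s a := fun n s a =>
      Finset.sum_nonneg fun l _ =>
        mul_nonneg (hist_nonneg P hP0 sch hs0 s0 n l s) (hs0 _ _)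
    have hgsum : ∀ n s, ∑ a, g n s a = hrProb P sch s0 n s := by
      intro n s
      rw [hrProb_eq_sum, hg]
      rw [Finset.sum_comm]
      refine Finset.sum_congr rfl fun l _ => ?_
      rw [← Finset.mul_sum, hs1, mul_one]
    choose a0 ha0 using hPen
    set sch' : S → ℕ → A → ℝ := fun s n a =>
      if 0 < hrProb P sch s0 n s then g n s a / hrProb P sch s0 n s
      else if a = a0 s then 1 else 0 with hsch'
    have hcr : IsCR P sch' := by
      refine ⟨?_, ?_, ?_⟩
      · intro s n a
        by_cases hpos : 0 < hrProb P sch s0 n s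
        · simp only [hsch', hpos, if_true]
          exact div_nonneg (hg0 n s a) hpos.le
        · simp only [hsch', hpos, if_false]
          by_cases hc : a = a0 s <;> simp [hc]
      · intro s n
        by_cases hpos : 0 < hrProb P sch s0 n s
        · simp only [hsch', hpos, if_true]
          rw [← Finset.sum_div, hgsum, div_self hpos.ne']
        · simp only [hsch', hpos, if_false]
          simp
      · intro s n a ha
        by_cases hpos : 0 < hrProb P sch s0 n s
        · simp only [hsch', hpos, if_true] at ha
          have hgpos : g n s a ≠ 0 := by
            intro h0
            rw [h0] at ha
            simp at ha
          obtain ⟨l, _, hl⟩ := Finset.exists_ne_zero_of_sum_ne_zero hgpos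
          have hschne : sch (l, s) a ≠ 0 := fun h0 => hl (by rw [h0, mul_zero])
          exact hs2 (l, s) a (lt_of_le_of_ne (hs0 _ _) (Ne.symm hschne))
        · simp only [hsch', hpos, if_false] at ha
          by_cases hc : a = a0 s
          · exact hc ▸ ha0 s
          · simp [hc] at ha
    refine ⟨sch', hcr, ?_⟩
    have hEq : ∀ n, crProb P sch' s0 n = hrProb P sch s0 n := by
      intro n
      induction n with
      | zero =>
        funext s
        rw [hrProb_zero]
        rfl
      | succ n ih =>
        funext s'
        show (∑ s, crProb P sch' s0 n s * ∑ a, sch' s n a * P s a s') = _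
        rw [hrProb_succ]
        refine Finset.sum_congr rfl fun s _ => ?_
        rw [ih]
        rcases (hrProb_nonneg P hP0 sch hs0 s0 n s).eq_or_lt with hz | hpos
        · rw [← hz, zero_mul]
          symm
          refine Finset.sum_eq_zero fun a _ => ?_
          have hga : g n s a = 0 := by
            have := (Finset.sum_eq_zero_iff_of_nonneg
              (fun a _ => hg0 n s a)).1 (by rw [hgsum, ← hz])
            exact this a (Finset.mem_univ a)
          show g n s a * P s a s' = 0
          rw [hga, zero_mul]
        · have hne := hpos.ne'
          simp only [hsch', hpos, if_true]
          rw [Finset.mul_sum]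
          refine Finset.sum_congr rfl fun a _ => ?_
          show hrProb P sch s0 n s * (g n s a / hrProb P sch s0 n s * P s a s')
            = g n s a * P s a s'
          field_simp
    exact congrArg (value q t c f) (funext hEq)
  · -- CR ⇒ HR
    intro sch' hsch'
    obtain ⟨hs0, hs1, hs2⟩ := hsch'
    refine ⟨fun h a => sch' h.2 h.1.length a,
      ⟨fun h a => hs0 _ _ _, fun h => hs1 _ _, fun h a ha => hs2 _ _ _ ha⟩, ?_⟩
    intro s0'
    set sch'' : List (S × A) × S → A → ℝ := fun h a => sch' h.2 h.1.length a
    have hEq : ∀ n, hrProb P sch'' s0' n = crProb P sch' s0' n := by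
      intro n
      induction n with
      | zero =>
        funext s
        rw [hrProb_zero]
        rfl
      | succ n ih =>
        funext s'
        rw [hrProb_succ]
        show _ = ∑ s, crProb P sch' s0' n s * ∑ a, sch' s n a * P s a s'
        refine Finset.sum_congr rfl fun s _ => ?_
        rw [← ih, Finset.mul_sum]
        refine Finset.sum_congr rfl fun a _ => ?_
        have hinner : (∑ l ∈ Ln S A n, hrHistProb P sch'' s0' n (l, s) * sch'' (l, s) a)
            = hrProb P sch'' s0' n s * sch' s n a := by
          rw [hrProb_eq_sum, Finset.sum_mul]
          refine Finset.sum_congr rfl fun l hl => ?_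
          have : l.length = n := (mem_Ln n l).1 hl
          show _ * sch' s l.length a = _
          rw [this]
        rw [hinner]
        ring
    exact congrArg (value q t c f) (funext hEq)

end TR
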